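/- Continued normal form in SL₂(ℤ): for every matrix A ∈ SL₂(ℤ) there exist a sign ε ∈ {+1, −1} and an integer M such that one of the following holds: (i) A = ε · σ₁^M; (ii) A = ε · σ₁ · σ₂ · σ₁^M; or (iii) A = ε · β(a, 1) · σ₁^M for some even continued form a. (Here σ₁ = σ₁(1) and σ₂ = σ₂(1).) -/

import Mathlib

open Matrix

/-- The generator σ₁ = σ₁(1) = [[1, −1], [0, 1]] of SL₂(ℤ). -/
def S1 : Matrix (Fin 2) (Fin 2) ℤ := !![1, -1; 0, 1]

/-- The generator σ₂ = σ₂(1) = [[1, 0], [1, 1]] of SL₂(ℤ). -/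
def S2 : Matrix (Fin 2) (Fin 2) ℤ := !![1, 0; 1, 1]

/-- `betaInt a k` is the product of the first `k` alternating factors
`σ₁^{-a 1} · σ₂^{a 2} · σ₁^{-a 3} ⋯` (indices start at 1), i.e. β(a, 1). -/
noncomputable def betaInt (a : ℕ → ℤ) : ℕ → Matrix (Fin 2) (Fin 2) ℤ
  | 0 => 1
  | k + 1 => betaInt a k *
      (if (k + 1) % 2 = 1 then S1 ^ (-(a (k + 1))) else S2 ^ (a (k + 1)))

/-- `a` (on indices 1,…,2n) is an even continued form: either `a₁ ≥ 0` and `aᵢ ≥ 1` for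
`2 ≤ i ≤ 2n`, or `a₁ ≤ 0` and `aᵢ ≤ −1` for `2 ≤ i ≤ 2n`. -/
def IsEvenForm (n : ℕ) (a : ℕ → ℤ) : Prop :=
  1 ≤ n ∧ ((0 ≤ a 1 ∧ ∀ i, 2 ≤ i → i ≤ 2 * n → 1 ≤ a i)
    ∨ (a 1 ≤ 0 ∧ ∀ i, 2 ≤ i → i ≤ 2 * n → a i ≤ -1))

/-- Value of the continued fraction `a i + 1/(a (i+1) + 1/(⋯ + 1/(a last)))`. -/
def cfVal (a : ℕ → ℤ) (last i : ℕ) : ℚ :=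
  if last ≤ i then (a i : ℚ)
  else (a i : ℚ) + 1 / cfVal a last (i + 1)
termination_by last - i
decreasing_by omega

/-!
Write `A = !![p, q; r, s]`. Negation and conjugation by `D = diag(1, -1)` preserve the three
normal forms, since `D σ₁^M D = σ₁^(-M)` and `D β(a) D = β(-a)`; together they realise every
sign pattern of `(p, r)`, so we may assume `p, r ≥ 0`. The cases `r = 0` and `p = 0` give (i)
and (ii). For `p, r > 0` we run the Euclidean algorithm on the first column: each step splits
off `σ₁^(-a₁) σ₂^a₂ = !![1 + a₁ a₂, a₁; a₂, 1]` and strictly decreases `r`, and once `r = 0`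
what remains is a power of `σ₁`.
-/

lemma S1_zpow (M : ℤ) : S1 ^ M = !![1, -M; 0, 1] := by
  have hS1 : IsUnit S1.det := by simp [S1, det_fin_two_of]
  induction M using Int.induction_on with
  | zero => simp [one_fin_two]
  | succ n ih => rw [zpow_add_one hS1, ih, S1, mul_fin_two]; simp
  | pred n ih =>
    rw [zpow_sub_one hS1, ih, inv_eq_left_inv (B := !![1, 1; 0, 1]) (by simp [S1, one_fin_two]),
      mul_fin_two]
    simp

lemma S2_zpow (M : ℤ) : S2 ^ M = !![1, 0; M, 1] := by
  have hS2 : IsUnit S2.det := by simp [S2, det_fin_two_of]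
  induction M using Int.induction_on with
  | zero => simp [one_fin_two]
  | succ n ih => rw [zpow_add_one hS2, ih, S2, mul_fin_two]; simp
  | pred n ih =>
    rw [zpow_sub_one hS2, ih, inv_eq_left_inv (B := !![1, 0; -1, 1]) (by simp [S2, one_fin_two]),
      mul_fin_two]
    simp
    ring

lemma betaInt_two (a : ℕ → ℤ) : betaInt a 2 = !![1 + a 1 * a 2, a 1; a 2, 1] := by
  simp [betaInt, S1_zpow, S2_zpow]

def pairCons (x y : ℤ) (a : ℕ → ℤ) : ℕ → ℤ
  | 0 => 0
  | 1 => x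
  | 2 => y
  | i + 3 => a (i + 1)

lemma betaInt_pairCons (x y : ℤ) (a : ℕ → ℤ) (k : ℕ) :
    betaInt (pairCons x y a) (k + 2) = !![1 + x * y, x; y, 1] * betaInt a k := by
  induction k with
  | zero => exact (betaInt_two _).trans (mul_one _).symm
  | succ k ih =>
    rw [show k + 1 + 2 = k + 2 + 1 by omega, betaInt, ih, betaInt, mul_assoc,
      show (k + 2 + 1) % 2 = (k + 1) % 2 by omega]
    rfl

lemma forall_pairCons {P : ℤ → Prop} {x y : ℤ} {a : ℕ → ℤ} {m : ℕ} (hy : P y)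
    (ha : ∀ i, 1 ≤ i → i ≤ m → P (a i)) : ∀ i, 2 ≤ i → i ≤ m + 2 → P (pairCons x y a i)
  | 2, _, _ => hy
  | i + 3, _, hi => ha (i + 1) (by omega) (by omega)

def diagSign : Matrix (Fin 2) (Fin 2) ℤ := !![1, 0; 0, -1]

lemma diagSign_conj_fin_two (a b c d : ℤ) :
    diagSign * !![a, b; c, d] * diagSign = !![a, -b; -c, d] := by
  simp [diagSign]

lemma diagSign_conj_mul (X Y : Matrix (Fin 2) (Fin 2) ℤ) :
    diagSign * (X * Y) * diagSign = diagSign * X * diagSign * (diagSign * Y * diagSign) := by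
  have h : diagSign * diagSign = 1 := by simp [diagSign, one_fin_two]
  simp only [mul_assoc, ← mul_assoc diagSign diagSign, h, one_mul]

lemma diagSign_conj_S1_zpow (M : ℤ) : diagSign * S1 ^ M * diagSign = S1 ^ (-M) := by
  simp [S1_zpow, diagSign_conj_fin_two]

lemma S1_mul_S2_mul_S1_zpow (M : ℤ) : S1 * S2 * S1 ^ M = !![0, -1; 1, 1 - M] := by
  rw [S1_zpow, S1, S2]
  simp
  ring

lemma betaInt_neg (a : ℕ → ℤ) (k : ℕ) :
    betaInt (-a) k = diagSign * betaInt a k * diagSign := by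
  induction k with
  | zero => simp [betaInt, diagSign, one_fin_two]
  | succ k ih =>
    rw [betaInt, betaInt, diagSign_conj_mul, ih]
    congr 1
    split_ifs <;> simp [S1_zpow, S2_zpow, diagSign_conj_fin_two]

lemma IsEvenForm.neg {n : ℕ} {a : ℕ → ℤ} (h : IsEvenForm n a) : IsEvenForm n (-a) := by
  obtain ⟨hn, ⟨h1, h⟩ | ⟨h1, h⟩⟩ := h
  · exact ⟨hn, Or.inr ⟨neg_nonpos.2 h1, fun i hi hi' => neg_le_neg (h i hi hi')⟩⟩
  · exact ⟨hn, Or.inl ⟨neg_nonneg.2 h1, fun i hi hi' => le_neg.2 (h i hi hi')⟩⟩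

def HasNormalForm (A : Matrix (Fin 2) (Fin 2) ℤ) : Prop :=
  ∃ (ε : ℤ) (M : ℤ), (ε = 1 ∨ ε = -1) ∧
    (A = ε • (S1 ^ M) ∨
     A = ε • (S1 * S2 * S1 ^ M) ∨
     ∃ (n : ℕ) (a : ℕ → ℤ), IsEvenForm n a ∧ A = ε • (betaInt a (2 * n) * S1 ^ M))

namespace HasNormalForm

variable {A : Matrix (Fin 2) (Fin 2) ℤ}

lemma neg (h : HasNormalForm A) : HasNormalForm (-A) := by
  obtain ⟨ε, M, hε, h⟩ := h
  exact ⟨-ε, M, by omega, by simpa only [neg_smul, neg_inj] using h⟩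

lemma diagSign_conj (h : HasNormalForm A) : HasNormalForm (diagSign * A * diagSign) := by
  obtain ⟨ε, M, hε, rfl | rfl | ⟨n, a, ha, rfl⟩⟩ := h
  · refine ⟨ε, -M, hε, Or.inl ?_⟩
    rw [Matrix.mul_smul, smul_mul, diagSign_conj_S1_zpow]
  · refine ⟨-ε, 2 - M, by omega, Or.inr (Or.inl ?_)⟩
    rw [Matrix.mul_smul, smul_mul, S1_mul_S2_mul_S1_zpow, S1_mul_S2_mul_S1_zpow,
      diagSign_conj_fin_two, neg_smul, ← smul_neg]
    congr 1
    ext i j; fin_cases i <;> fin_cases j <;> simp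
    ring
  · refine ⟨ε, -M, hε, Or.inr (Or.inr ⟨n, -a, ha.neg, ?_⟩)⟩
    rw [Matrix.mul_smul, smul_mul, diagSign_conj_mul, betaInt_neg, diagSign_conj_S1_zpow]

end HasNormalForm

lemma exists_pair_factor {p q r s : ℤ} (hp : 0 < p) (hr : 0 < r) (hdet : p * s - q * r = 1) :
    ∃ a₁ a₂ p' q' r' s' : ℤ, 0 ≤ a₁ ∧ (r < p → 1 ≤ a₁) ∧ 1 ≤ a₂ ∧ 0 ≤ r' ∧ r' < p' ∧
      r' < r ∧ p' * s' - q' * r' = 1 ∧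
      !![p, q; r, s] = !![1 + a₁ * a₂, a₁; a₂, 1] * !![p', q'; r', s'] := by
  -- Dividing `p - 1` rather than `p` by `r` puts `p' = p - a₁ r` in `[1, r]`, so that `a₂ ≥ 1`.
  obtain ⟨a₁, m, hp_eq, hm, hmr⟩ : ∃ a₁ m, p - 1 = r * a₁ + m ∧ 0 ≤ m ∧ m < r :=
    ⟨_, _, (Int.mul_ediv_add_emod _ _).symm, Int.emod_nonneg _ hr.ne', Int.emod_lt_of_pos _ hr⟩
  obtain ⟨a₂, r', hr_eq, hr', hrm⟩ : ∃ a₂ r', r = (m + 1) * a₂ + r' ∧ 0 ≤ r' ∧ r' < m + 1 :=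
    ⟨_, _, (Int.mul_ediv_add_emod _ _).symm, Int.emod_nonneg _ (by omega),
      Int.emod_lt_of_pos _ (by omega)⟩
  refine ⟨a₁, a₂, m + 1, q - a₁ * s, r', s - a₂ * (q - a₁ * s), by nlinarith,
    fun hrp => by nlinarith, by nlinarith, hr', hrm, by omega,
    by linear_combination hdet - s * hp_eq + (q - a₁ * s) * hr_eq, ?_⟩
  rw [mul_fin_two]
  simp only [EmbeddingLike.apply_eq_iff_eq, Matrix.vecCons_inj, and_true]
  exact ⟨⟨by linear_combination hp_eq + a₁ * hr_eq, by ring⟩, by linear_combination hr_eq, by ring⟩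

lemma exists_betaInt_of_lt {p q r s : ℤ} (hdet : p * s - q * r = 1) (hr : 0 ≤ r) (hrp : r < p) :
    ∃ (n : ℕ) (a : ℕ → ℤ) (M : ℤ), (∀ i, 1 ≤ i → i ≤ 2 * n → 1 ≤ a i) ∧
      !![p, q; r, s] = betaInt a (2 * n) * S1 ^ M := by
  rcases hr.eq_or_lt with rfl | hr
  · have hp : p = 1 := Int.eq_one_of_mul_eq_one_right hrp.le (b := s) (by linarith)
    subst hp
    refine ⟨0, 0, -q, by omega, ?_⟩
    simp [betaInt, S1_zpow, show s = 1 by linarith]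
  · obtain ⟨a₁, a₂, p', q', r', s', -, ha₁, ha₂, hr', hrp', hrr', hdet', hA⟩ :=
      exists_pair_factor (hr.trans hrp) hr hdet
    obtain ⟨n, a, M, ha, hA'⟩ := exists_betaInt_of_lt hdet' hr' hrp'
    refine ⟨n + 1, pairCons a₁ a₂ a, M, fun i hi hi' => ?_, ?_⟩
    · rcases (show i = 1 ∨ 2 ≤ i by omega) with rfl | hi
      · exact ha₁ hrp
      · exact forall_pairCons ha₂ ha i hi hi'
    · rw [hA, hA', Nat.mul_succ, betaInt_pairCons, mul_assoc]
termination_by r.toNat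
decreasing_by omega

lemma exists_isEvenForm_of_pos {p q r s : ℤ} (hp : 0 < p) (hr : 0 < r)
    (hdet : p * s - q * r = 1) :
    ∃ (n : ℕ) (a : ℕ → ℤ) (M : ℤ),
      IsEvenForm n a ∧ !![p, q; r, s] = betaInt a (2 * n) * S1 ^ M := by
  obtain ⟨a₁, a₂, p', q', r', s', ha₁, -, ha₂, hr', hrp', -, hdet', hA⟩ :=
    exists_pair_factor hp hr hdet
  obtain ⟨n, a, M, ha, hA'⟩ := exists_betaInt_of_lt hdet' hr' hrp'
  refine ⟨n + 1, pairCons a₁ a₂ a, M, ⟨by omega, Or.inl ⟨ha₁, forall_pairCons ha₂ ha⟩⟩, ?_⟩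
  rw [hA, hA', Nat.mul_succ, betaInt_pairCons, mul_assoc]

lemma hasNormalForm_of_nonneg {p q r s : ℤ} (hp : 0 ≤ p) (hr : 0 ≤ r)
    (hdet : p * s - q * r = 1) : HasNormalForm !![p, q; r, s] := by
  rcases hr.eq_or_lt with rfl | hr
  · have hp : p = 1 := Int.eq_one_of_mul_eq_one_right hp (b := s) (by linarith)
    subst hp
    refine ⟨1, -q, Or.inl rfl, Or.inl ?_⟩
    simp [S1_zpow, show s = 1 by linarith]
  rcases hp.eq_or_lt with rfl | hp
  · have hr : r = 1 := Int.eq_one_of_mul_eq_one_right hr.le (b := -q) (by linarith)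
    subst hr
    refine ⟨1, 1 - s, Or.inl rfl, Or.inr (Or.inl ?_)⟩
    simp [S1_mul_S2_mul_S1_zpow, show q = -1 by linarith]
  obtain ⟨n, a, M, ha, hA⟩ := exists_isEvenForm_of_pos hp hr hdet
  exact ⟨1, M, Or.inl rfl, Or.inr (Or.inr ⟨n, a, ha, by rw [one_smul, hA]⟩)⟩

theorem continued_normal_form (A : Matrix (Fin 2) (Fin 2) ℤ) (hA : A.det = 1) :
    ∃ (ε : ℤ) (M : ℤ), (ε = 1 ∨ ε = -1) ∧
      (A = ε • (S1 ^ M) ∨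
       A = ε • (S1 * S2 * S1 ^ M) ∨
       ∃ (n : ℕ) (a : ℕ → ℤ), IsEvenForm n a ∧ A = ε • (betaInt a (2 * n) * S1 ^ M)) := by
  obtain ⟨p, q, r, s, rfl⟩ : ∃ p q r s, A = !![p, q; r, s] := ⟨_, _, _, _, eta_fin_two A⟩
  rw [det_fin_two_of] at hA
  show HasNormalForm _
  rcases le_total 0 p with hp | hp <;> rcases le_total 0 r with hr | hr
  · exact hasNormalForm_of_nonneg hp hr hA
  · have h := hasNormalForm_of_nonneg hp (neg_nonneg.2 hr) (q := -q) (s := s) (by linarith)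
    simpa [diagSign_conj_fin_two] using h.diagSign_conj
  · have h := hasNormalForm_of_nonneg (neg_nonneg.2 hp) hr (q := q) (s := -s) (by linarith)
    simpa [diagSign_conj_fin_two] using h.diagSign_conj.neg
  · have h := hasNormalForm_of_nonneg (neg_nonneg.2 hp) (neg_nonneg.2 hr) (q := -q) (s := -s)
      (by linarith)
    simpa using h.neg
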